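/- arXiv:2409.05812 — 6 statements merged into one kernel-verified Lean document; each statement's English description precedes it below -/
import Mathlib

section
/- Let E, A ∈ ℝ^{m×n}, B ∈ ℝ^{m×k}, D ∈ ℝ^{m×q}, F ∈ ℝ^{m×l}, C ∈ ℝ^{r×n}, G ∈ ℝ^{r×q}, K ∈ ℝ^{p×n}, H ∈ ℝ^{l×p}, and let N ∈ ℝ^{p×p}, T ∈ ℝ^{p×m}, L ∈ ℝ^{p×r}, M ∈ ℝ^{p×r}. Let u : ℝ → ℝᵏ and v : ℝ → ℝ^q be functions, g : ℝˡ × ℝᵏ → ℝˡ a function, and let x : ℝ → ℝⁿ and w : ℝ → ℝᵖ be differentiable functions such that for every t ∈ ℝ: E·ẋ(t) = A·x(t) + B·u(t) + D·v(t) + F·g(H·K·x(t), u(t)), and, with y(t) := C·x(t) + G·v(t), z(t) := K·x(t), ẑ(t) := w(t) + M·y(t), one has ẇ(t) = N·w(t) + T·B·u(t) + L·y(t) + T·F·g(H·ẑ(t), u(t)). Define e₁(t) := T·E·x(t) − w(t) and e(t) := z(t) − ẑ(t). Then for every t ∈ ℝ: (i) e(t) = e₁(t) − (T·E + M·C − K)·x(t)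 − M·G·v(t), and (ii) e₁ is differentiable with ė₁(t) = N·e₁(t) + (T·D − L·G)·v(t) + (T·A − L·C − N·T·E)·x(t) + T·F·(g(H·K·x(t), u(t)) − g(H·ẑ(t), u(t))). -/
open Matrix

section MulVec

variable {ι κ : Type*} [Fintype ι] [Fintype κ]

theorem HasDerivAt.matrix_mulVec (A : Matrix ι κ ℝ) {f : ℝ → κ → ℝ} {f' : κ → ℝ} {t : ℝ}
    (hf : HasDerivAt f f' t) : HasDerivAt (fun s => A *ᵥ f s) (A *ᵥ f') t :=
  (Matrix.mulVecLin A).toContinuousLinearMap.hasFDerivAt.comp_hasDerivAt t hf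

end MulVec

section ErrorIdentities

variable {R : Type*} [CommRing R] {ιm ιn ιk ιq ιl ιr ιp : Type*}
  [Fintype ιm] [Fintype ιn] [Fintype ιq] [Fintype ιr]

theorem functional_error_eq (E : Matrix ιm ιn R) (C : Matrix ιr ιn R) (G : Matrix ιr ιq R)
    (K : Matrix ιp ιn R) (T : Matrix ιp ιm R) (M : Matrix ιp ιr R)
    (x : ιn → R) (v : ιq → R) (w : ιp → R) :
    K *ᵥ x - (w + M *ᵥ (C *ᵥ x + G *ᵥ v)) =
      ((T * E) *ᵥ x - w) - (T * E + M * C - K) *ᵥ x - (M * G) *ᵥ v := by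
  simp only [add_mulVec, sub_mulVec, mulVec_add, ← mulVec_mulVec]
  abel

/-- `T E ẋ − ẇ` with the plant and filter equations substituted: the filter's `T B u` term is
exactly what cancels the plant input. -/
theorem filter_error_deriv_eq [Fintype ιk] [Fintype ιl] [Fintype ιp]
    (E A : Matrix ιm ιn R) (B : Matrix ιm ιk R)
    (D : Matrix ιm ιq R) (F : Matrix ιm ιl R) (C : Matrix ιr ιn R) (G : Matrix ιr ιq R)
    (N : Matrix ιp ιp R) (T : Matrix ιp ιm R) (L : Matrix ιp ιr R)
    (x : ιn → R) (u : ιk → R) (v : ιq → R) (w : ιp → R) (a b : ιl → R) :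
    T *ᵥ (A *ᵥ x + B *ᵥ u + D *ᵥ v + F *ᵥ a) -
        (N *ᵥ w + (T * B) *ᵥ u + L *ᵥ (C *ᵥ x + G *ᵥ v) + (T * F) *ᵥ b) =
      N *ᵥ ((T * E) *ᵥ x - w) + (T * D - L * G) *ᵥ v + (T * A - L * C - N * (T * E)) *ᵥ x
        + (T * F) *ᵥ (a - b) := by
  simp only [sub_mulVec, mulVec_add, mulVec_sub, ← mulVec_mulVec]
  abel

end ErrorIdentities

/-- Error dynamics of the functional filter: for the nonlinear descriptor plant
`E ẋ = A x + B u + D v + F g(HKx, u)`, `y = C x + G v`, `z = K x` and the filter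
`ẇ = N w + T B u + L y + T F g(H ẑ, u)`, `ẑ = w + M y`, the errors
`e₁ = T E x − w` and `e = z − ẑ` satisfy
`e = e₁ − (TE + MC − K) x − M G v` and
`ė₁ = N e₁ + (TD − LG) v + (TA − LC − NTE) x + TF (g(HKx,u) − g(Hẑ,u))`. -/
theorem filter_error_dynamics (m n k q l r p : ℕ)
    (E A : Matrix (Fin m) (Fin n) ℝ) (B : Matrix (Fin m) (Fin k) ℝ)
    (D : Matrix (Fin m) (Fin q) ℝ) (F : Matrix (Fin m) (Fin l) ℝ)
    (C : Matrix (Fin r) (Fin n) ℝ) (G : Matrix (Fin r) (Fin q) ℝ)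
    (K : Matrix (Fin p) (Fin n) ℝ) (H : Matrix (Fin l) (Fin p) ℝ)
    (N : Matrix (Fin p) (Fin p) ℝ) (T : Matrix (Fin p) (Fin m) ℝ)
    (L M : Matrix (Fin p) (Fin r) ℝ)
    (u : ℝ → Fin k → ℝ) (v : ℝ → Fin q → ℝ)
    (g : (Fin l → ℝ) → (Fin k → ℝ) → (Fin l → ℝ))
    (x : ℝ → Fin n → ℝ) (w : ℝ → Fin p → ℝ)
    (hx : Differentiable ℝ x) (hw : Differentiable ℝ w)
    (y : ℝ → Fin r → ℝ) (z : ℝ → Fin p → ℝ) (zhat : ℝ → Fin p → ℝ)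
    (hy : ∀ t : ℝ, y t = C *ᵥ x t + G *ᵥ v t)
    (hz : ∀ t : ℝ, z t = K *ᵥ x t)
    (hzhat : ∀ t : ℝ, zhat t = w t + M *ᵥ y t)
    (hplant : ∀ t : ℝ,
      E *ᵥ deriv x t =
        A *ᵥ x t + B *ᵥ u t + D *ᵥ v t + F *ᵥ g ((H * K) *ᵥ x t) (u t))
    (hfilter : ∀ t : ℝ,
      deriv w t =
        N *ᵥ w t + (T * B) *ᵥ u t + L *ᵥ y t + (T * F) *ᵥ g (H *ᵥ zhat t) (u t))
    (e₁ : ℝ → Fin p → ℝ) (e : ℝ → Fin p → ℝ)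
    (he₁ : ∀ t : ℝ, e₁ t = (T * E) *ᵥ x t - w t)
    (he : ∀ t : ℝ, e t = z t - zhat t) :
    ∀ t : ℝ,
      (e t = e₁ t - (T * E + M * C - K) *ᵥ x t - (M * G) *ᵥ v t) ∧
      HasDerivAt e₁
        (N *ᵥ e₁ t + (T * D - L * G) *ᵥ v t + (T * A - L * C - N * (T * E)) *ᵥ x t
          + (T * F) *ᵥ (g ((H * K) *ᵥ x t) (u t) - g (H *ᵥ zhat t) (u t))) t := by
  intro t
  refine ⟨by rw [he, hz, hzhat, hy, he₁, functional_error_eq E C G K T M], ?_⟩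
  have hderiv : HasDerivAt e₁ (T *ᵥ (E *ᵥ deriv x t) - deriv w t) t := by
    rw [funext he₁, mulVec_mulVec]
    exact ((hx t).hasDerivAt.matrix_mulVec (T * E)).sub (hw t).hasDerivAt
  rwa [hplant, hfilter, hy, filter_error_deriv_eq E A B D F C G N T L, ← he₁] at hderiv
end

section
/- Let E, A ∈ ℝ^{m×n}, C ∈ ℝ^{r×n}, K ∈ ℝ^{p×n}. There exist matrices T ∈ ℝ^{p×m}, M ∈ ℝ^{p×r}, P ∈ ℝ^{p×r}, N ∈ ℝ^{p×p} satisfying T·E + M·C = K and T·A + P·C − N·K = 0 if and only if the rank of the block matrix with block rows [E A], [C 0], [0 C], [0 K], [K 0] (of size (m+2r+2p)×2n) equals the rank of the block matrix with block rows [E A], [C 0], [0 C], [0 K] (of size (m+2r+p)×2n). -/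
/-!
Equality of the two ranks says that the rows of `[K 0]` lie in the row space of the matrix `B`
with block rows `[E A], [C 0], [0 C], [0 K]`, i.e. that `[K 0] = X * B` for some `X`. Splitting
`X` into column blocks `[T M P N']` gives `X * B = [T E + M C, T A + P C + N' K]`, so this is the
pair of equations with `N = -N'`.
-/

open Submodule Set

namespace Matrix

variable {R : Type*} {m n p q r s k n₁ n₂ : Type*}

theorem fromCols_add_fromCols [Add R] (A₁ B₁ : Matrix m n₁ R) (A₂ B₂ : Matrix m n₂ R) :
    fromCols A₁ A₂ + fromCols B₁ B₂ = fromCols (A₁ + B₁) (A₂ + B₂) := by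
  ext i (j | j) <;> rfl

theorem exists_fromCols_iff (Q : Matrix m (n₁ ⊕ n₂) R → Prop) :
    (∃ X, Q X) ↔ ∃ X₁ X₂, Q (fromCols X₁ X₂) :=
  ⟨fun ⟨X, hX⟩ => ⟨X.toCols₁, X.toCols₂, by rwa [fromCols_toCols]⟩,
    fun ⟨_, _, hX⟩ => ⟨_, hX⟩⟩

theorem fromCols_mul_fromRows_blocks [Semiring R] [Fintype m] [Fintype r]
    [Fintype p] (T : Matrix k m R) (M P : Matrix k r R) (N : Matrix k p R)
    (E A : Matrix m n R) (C : Matrix r n R) (L : Matrix p n R) :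
    fromCols (fromCols (fromCols T M) P) N *
        fromRows (fromRows (fromRows (fromCols E A) (fromCols C 0)) (fromCols 0 C))
          (fromCols 0 L) =
      fromCols (T * E + M * C) (T * A + P * C + N * L) := by
  simp only [fromCols_mul_fromRows, mul_fromCols, fromCols_add_fromCols, Matrix.mul_zero,
    add_zero]

section Field

variable [Field R] [Fintype q]

theorem exists_mul_eq_iff_span_row_le (B : Matrix q s R) (L : Matrix p s R) :
    (∃ X : Matrix p q R, X * B = L) ↔ span R (range L.row) ≤ span R (range B.row) := by
  rw [span_le, range_subset_iff, ← range_vecMulLinear]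
  refine ⟨fun ⟨X, hX⟩ i => ⟨X i, by rw [← hX]; rfl⟩, fun h => ?_⟩
  choose x hx using h
  exact ⟨Matrix.of x, by ext i j; exact congr_fun (hx i) j⟩

theorem rank_fromRows_eq_rank_iff_exists_mul_eq [Fintype p] [Fintype s] (B : Matrix q s R)
    (L : Matrix p s R) : (fromRows B L).rank = B.rank ↔ ∃ X : Matrix p q R, X * B = L := by
  rw [exists_mul_eq_iff_span_row_le, rank_eq_finrank_span_row, rank_eq_finrank_span_row,
    show range (fromRows B L).row = range B.row ∪ range L.row from Sum.elim_range B L,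
    span_union, ← sup_eq_left]
  exact ⟨fun h => (eq_of_le_of_finrank_le le_sup_left h.le).symm, fun h => by rw [h]⟩

end Field

end Matrix

open Matrix

/-- The linear matrix equations `T·E + M·C = K` and `T·A + P·C − N·K = 0` are solvable
for `(T, M, P, N)` if and only if the rank of the block matrix with block rows
`[E A], [C 0], [0 C], [0 K], [K 0]` equals the rank of the block matrix with block
rows `[E A], [C 0], [0 C], [0 K]`. -/
theorem linear_filter_equations_solvable_iff_rank (m n r p : ℕ)
    (E A : Matrix (Fin m) (Fin n) ℝ) (C : Matrix (Fin r) (Fin n) ℝ)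
    (K : Matrix (Fin p) (Fin n) ℝ) :
    (∃ (T : Matrix (Fin p) (Fin m) ℝ) (M : Matrix (Fin p) (Fin r) ℝ)
        (P : Matrix (Fin p) (Fin r) ℝ) (N : Matrix (Fin p) (Fin p) ℝ),
        T * E + M * C = K ∧ T * A + P * C - N * K = 0) ↔
      (Matrix.fromRows
          (Matrix.fromRows
            (Matrix.fromRows
              (Matrix.fromRows (Matrix.fromCols E A) (Matrix.fromCols C 0))
              (Matrix.fromCols 0 C))
            (Matrix.fromCols 0 K))
          (Matrix.fromCols K 0)).rank =
        (Matrix.fromRows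
          (Matrix.fromRows
            (Matrix.fromRows (Matrix.fromCols E A) (Matrix.fromCols C 0))
            (Matrix.fromCols 0 C))
          (Matrix.fromCols 0 K)).rank := by
  simp only [rank_fromRows_eq_rank_iff_exists_mul_eq, exists_fromCols_iff,
    fromCols_mul_fromRows_blocks, fromCols_ext_iff]
  constructor
  · rintro ⟨T, M, P, N, hK, hA⟩
    exact ⟨T, M, P, -N, hK, by rwa [Matrix.neg_mul, ← sub_eq_add_neg]⟩
  · rintro ⟨T, M, P, N, hK, hA⟩
    exact ⟨T, M, P, -N, hK, by rwa [Matrix.neg_mul, sub_neg_eq_add]⟩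
end

section
/- Let G ∈ ℝ^{r×q}, D ∈ ℝ^{m×q}, and let T₁ ∈ ℝ^{p×m}, M₁, P₁ ∈ ℝ^{p×r}, N₁ ∈ ℝ^{p×p}, T₂ ∈ ℝ^{s×m}, M₂, P₂ ∈ ℝ^{s×r}, N₂ ∈ ℝ^{s×p}, Z₁ ∈ ℝ^{p×s}. Set M̄₂ := M₂·G ∈ ℝ^{s×q} and let X ∈ ℝ^{q×s} satisfy M̄₂·X·M̄₂ = M̄₂. Define 𝒯₂ := (Iₛ − M̄₂·X)·T₂, ℳ₂ := (Iₛ − M̄₂·X)·M₂, 𝒫₂ := (Iₛ − M̄₂·X)·P₂, 𝒩₂ := (Iₛ − M̄₂·X)·N₂, and T := T₁ − Z₁·𝒯₂, M := M₁ − Z₁·ℳ₂, P := P₁ − Z₁·𝒫₂, N := N₁ − Z₁·𝒩₂, L := N·M − P, B₁ := T₁·D − N₁·M₁·G + P₁·G, B₂ := 𝒯₂·D − 𝒩₂·M₁·G + 𝒫₂·G. Then M·G = M₁·G and T·D − L·G = B₁ − Z₁·B₂. -/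
/-! Since `X` is a generalized inverse of `M̄₂ = M₂ G`, the projector `1 - M̄₂ X` kills `M̄₂`, so
`ℳ₂ G = 0` and hence `M G = M₁ G`. Once `M G` is replaced by `M₁ G`, the second identity is a
rearrangement that is linear in `Z₁`. -/

namespace Matrix

variable {R : Type*} [Ring R] {k l m n o : Type*}

theorem one_sub_mul_mul_eq_zero_of_mul_mul_eq [Fintype m] [Fintype n] [DecidableEq m]
    {A : Matrix m n R} {X : Matrix n m R} (hX : A * X * A = A) : (1 - A * X) * A = 0 := by
  rw [Matrix.sub_mul, Matrix.one_mul, hX, sub_self]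

theorem sub_mul_mul_eq_of_mul_eq_zero [Fintype l] [Fintype o]
    {M₁ : Matrix k l R} {Z : Matrix k o R} {K : Matrix o l R} {G : Matrix l n R}
    (hK : K * G = 0) : (M₁ - Z * K) * G = M₁ * G := by
  rw [Matrix.sub_mul, Matrix.mul_assoc, hK, Matrix.mul_zero, sub_zero]

theorem sub_mul_sub_sub_mul_eq_of_mul_eq [Fintype k] [Fintype l] [Fintype m] [Fintype o]
    {T₁ : Matrix k m R} {T₂ : Matrix o m R} {D : Matrix m n R} {N₁ : Matrix k k R}
    {N₂ : Matrix o k R} {P₁ M M₁ : Matrix k l R}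
    {P₂ : Matrix o l R} {Z : Matrix k o R} {G : Matrix l n R} (hMG : M * G = M₁ * G) :
    (T₁ - Z * T₂) * D - ((N₁ - Z * N₂) * M - (P₁ - Z * P₂)) * G =
      (T₁ * D - N₁ * M₁ * G + P₁ * G) - Z * (T₂ * D - N₂ * M₁ * G + P₂ * G) := by
  simp only [Matrix.sub_mul, Matrix.mul_sub, Matrix.mul_add, Matrix.mul_assoc, hMG]
  abel

end Matrix

theorem projected_parametrization_identities_general (r q m p s : ℕ)
    (G : Matrix (Fin r) (Fin q) ℝ) (D : Matrix (Fin m) (Fin q) ℝ)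
    (T₁ : Matrix (Fin p) (Fin m) ℝ) (M₁ P₁ : Matrix (Fin p) (Fin r) ℝ)
    (N₁ : Matrix (Fin p) (Fin p) ℝ)
    (M₂ : Matrix (Fin s) (Fin r) ℝ)
    (Z₁ : Matrix (Fin p) (Fin s) ℝ) (X : Matrix (Fin q) (Fin s) ℝ)
    (Mbar₂ : Matrix (Fin s) (Fin q) ℝ) (hMbar₂ : Mbar₂ = M₂ * G)
    (hX : Mbar₂ * X * Mbar₂ = Mbar₂)
    (𝒯₂ : Matrix (Fin s) (Fin m) ℝ)
    (ℳ₂ : Matrix (Fin s) (Fin r) ℝ) (hℳ₂ : ℳ₂ = (1 - Mbar₂ * X) * M₂)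
    (𝒫₂ : Matrix (Fin s) (Fin r) ℝ)
    (𝒩₂ : Matrix (Fin s) (Fin p) ℝ)
    (T : Matrix (Fin p) (Fin m) ℝ) (hT : T = T₁ - Z₁ * 𝒯₂)
    (M : Matrix (Fin p) (Fin r) ℝ) (hM : M = M₁ - Z₁ * ℳ₂)
    (P : Matrix (Fin p) (Fin r) ℝ) (hP : P = P₁ - Z₁ * 𝒫₂)
    (N : Matrix (Fin p) (Fin p) ℝ) (hN : N = N₁ - Z₁ * 𝒩₂)
    (L : Matrix (Fin p) (Fin r) ℝ) (hL : L = N * M - P)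
    (B₁ : Matrix (Fin p) (Fin q) ℝ) (hB₁ : B₁ = T₁ * D - N₁ * M₁ * G + P₁ * G)
    (B₂ : Matrix (Fin s) (Fin q) ℝ) (hB₂ : B₂ = 𝒯₂ * D - 𝒩₂ * M₁ * G + 𝒫₂ * G) :
    M * G = M₁ * G ∧ T * D - L * G = B₁ - Z₁ * B₂ := by
  subst hT hM hP hN hL hB₁ hB₂
  have hℳ₂G : ℳ₂ * G = 0 := by
    rw [hℳ₂, Matrix.mul_assoc, ← hMbar₂]
    exact Matrix.one_sub_mul_mul_eq_zero_of_mul_mul_eq hX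
  have hMG := Matrix.sub_mul_mul_eq_of_mul_eq_zero (M₁ := M₁) (Z := Z₁) hℳ₂G
  exact ⟨hMG, Matrix.sub_mul_sub_sub_mul_eq_of_mul_eq hMG⟩

/-- With the projected parametrization of the filter matrices via a generalized inverse
`X` of `M̄₂ = M₂ G` (so `M̄₂ X M̄₂ = M̄₂`), the disturbance-to-error matrices satisfy
`M G = M₁ G` and `T D − L G = B₁ − Z₁ B₂`. -/
theorem projected_parametrization_identities (r q m p s : ℕ)
    (G : Matrix (Fin r) (Fin q) ℝ) (D : Matrix (Fin m) (Fin q) ℝ)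
    (T₁ : Matrix (Fin p) (Fin m) ℝ) (M₁ P₁ : Matrix (Fin p) (Fin r) ℝ)
    (N₁ : Matrix (Fin p) (Fin p) ℝ)
    (T₂ : Matrix (Fin s) (Fin m) ℝ) (M₂ P₂ : Matrix (Fin s) (Fin r) ℝ)
    (N₂ : Matrix (Fin s) (Fin p) ℝ)
    (Z₁ : Matrix (Fin p) (Fin s) ℝ) (X : Matrix (Fin q) (Fin s) ℝ)
    (Mbar₂ : Matrix (Fin s) (Fin q) ℝ) (hMbar₂ : Mbar₂ = M₂ * G)
    (hX : Mbar₂ * X * Mbar₂ = Mbar₂)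
    (𝒯₂ : Matrix (Fin s) (Fin m) ℝ) (h𝒯₂ : 𝒯₂ = (1 - Mbar₂ * X) * T₂)
    (ℳ₂ : Matrix (Fin s) (Fin r) ℝ) (hℳ₂ : ℳ₂ = (1 - Mbar₂ * X) * M₂)
    (𝒫₂ : Matrix (Fin s) (Fin r) ℝ) (h𝒫₂ : 𝒫₂ = (1 - Mbar₂ * X) * P₂)
    (𝒩₂ : Matrix (Fin s) (Fin p) ℝ) (h𝒩₂ : 𝒩₂ = (1 - Mbar₂ * X) * N₂)
    (T : Matrix (Fin p) (Fin m) ℝ) (hT : T = T₁ - Z₁ * 𝒯₂)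
    (M : Matrix (Fin p) (Fin r) ℝ) (hM : M = M₁ - Z₁ * ℳ₂)
    (P : Matrix (Fin p) (Fin r) ℝ) (hP : P = P₁ - Z₁ * 𝒫₂)
    (N : Matrix (Fin p) (Fin p) ℝ) (hN : N = N₁ - Z₁ * 𝒩₂)
    (L : Matrix (Fin p) (Fin r) ℝ) (hL : L = N * M - P)
    (B₁ : Matrix (Fin p) (Fin q) ℝ) (hB₁ : B₁ = T₁ * D - N₁ * M₁ * G + P₁ * G)
    (B₂ : Matrix (Fin s) (Fin q) ℝ) (hB₂ : B₂ = 𝒯₂ * D - 𝒩₂ * M₁ * G + 𝒫₂ * G) :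
    M * G = M₁ * G ∧ T * D - L * G = B₁ - Z₁ * B₂ :=
  projected_parametrization_identities_general r q m p s G D T₁ M₁ P₁ N₁ M₂ Z₁ X Mbar₂ hMbar₂ hX 𝒯₂
    ℳ₂ hℳ₂ 𝒫₂ 𝒩₂ T hT M hM P hP N hN L hL B₁ hB₁ B₂ hB₂
end

section
/- Let Q ∈ ℝ^{p×p} be symmetric, N ∈ ℝ^{p×p}, S ∈ ℝ^{p×l}, ℬ ∈ ℝ^{p×q}, H ∈ ℝ^{l×p}, H̃ ∈ ℝ^{p×q}, and ρ, γ ∈ ℝ. Set ℋ := Hᵀ·H and let Π̃ be the symmetric (p+l+q)×(p+l+q) block matrix with blocks Π̃₁₁ = Nᵀ·Q + Q·N − ρ·ℋ + Iₚ, Π̃₁₂ = Q·S + Hᵀ, Π̃₁₃ = Q·ℬ + ρ·ℋ·H̃ − H̃, Π̃₂₂ = 0, Π̃₂₃ = −H·H̃, Π̃₃₃ = −ρ·H̃ᵀ·ℋ·H̃ + H̃ᵀ·H̃ − γ²·I_q, and Π̃ⱼᵢ = Π̃ᵢⱼᵀ. Then for all e₁ ∈ ℝᵖ, g ∈ ℝˡ,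 v ∈ ℝ^q satisfying the sector inequality 2·⟨H·(e₁ − H̃·v), g⟩ ≥ ρ·‖H·(e₁ − H̃·v)‖², one has 2·⟨Q·e₁, N·e₁ + S·g + ℬ·v⟩ + ‖e₁ − H̃·v‖² − γ²·‖v‖² ≤ ζᵀ·Π̃·ζ, where ζ := (e₁, g, v) ∈ ℝ^{p+l+q}. In particular, if −Π̃ is positive semidefinite, then 2·⟨Q·e₁, N·e₁ + S·g + ℬ·v⟩ + ‖e₁ − H̃·v‖² − γ²·‖v‖² ≤ 0. -/
/-!
Expanding `ζᵀ Π̃ ζ` block by block, with `e := e₁ - H̃ v`, gives exactly the dissipation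
expression `2⟨Q e₁, N e₁ + S g + ℬ v⟩ + ‖e‖² - γ²‖v‖²` plus the sector term
`2⟨H e, g⟩ - ρ‖H e‖²`, which the sector inequality makes nonnegative.
-/

open Matrix

variable {m n o R : Type*} [Fintype m] [Fintype n] [Fintype o] [CommRing R]

theorem Matrix.IsSymm.dotProduct_mulVec_comm {Q : Matrix m m R} (hQ : Q.IsSymm) (x y : m → R) :
    x ⬝ᵥ (Q *ᵥ y) = (Q *ᵥ x) ⬝ᵥ y := by
  conv_lhs => rw [← hQ.eq]
  rw [dotProduct_transpose_mulVec, dotProduct_comm]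

theorem dotProduct_mulVec_fromBlocks_transpose (A : Matrix m m R) (B : Matrix m n R)
    (D : Matrix n n R) (x : m → R) (y : n → R) :
    Sum.elim x y ⬝ᵥ (fromBlocks A B Bᵀ D *ᵥ Sum.elim x y) =
      x ⬝ᵥ (A *ᵥ x) + 2 * (x ⬝ᵥ (B *ᵥ y)) + y ⬝ᵥ (D *ᵥ y) := by
  rw [fromBlocks_mulVec, sumElim_dotProduct_sumElim, Sum.elim_comp_inl, Sum.elim_comp_inr,
    dotProduct_add, dotProduct_add, dotProduct_transpose_mulVec]
  ring

/-- The matrix `Π̃` of the linear matrix inequality, written with `ℋ = Hᵀ H`. -/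
def lmiMatrix [DecidableEq m] [DecidableEq o] (Q N : Matrix m m R) (S : Matrix m n R)
    (B : Matrix m o R) (H : Matrix n m R) (Htil : Matrix m o R) (ρ γ : R) :
    Matrix (m ⊕ (n ⊕ o)) (m ⊕ (n ⊕ o)) R :=
  fromBlocks (Nᵀ * Q + Q * N - ρ • (Hᵀ * H) + 1)
    (fromCols (Q * S + Hᵀ) (Q * B + ρ • (Hᵀ * H * Htil) - Htil))
    (fromRows (Q * S + Hᵀ)ᵀ (Q * B + ρ • (Hᵀ * H * Htil) - Htil)ᵀ)
    (fromBlocks 0 (-(H * Htil)) (-(H * Htil))ᵀ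
      (-(ρ • (Htilᵀ * (Hᵀ * H) * Htil)) + Htilᵀ * Htil - γ ^ 2 • (1 : Matrix o o R)))

theorem dotProduct_lmiMatrix_mulVec [DecidableEq m] [DecidableEq o] {Q : Matrix m m R}
    (hQ : Q.IsSymm) (N : Matrix m m R) (S : Matrix m n R) (B : Matrix m o R)
    (H : Matrix n m R) (Htil : Matrix m o R) (ρ γ : R) (e₁ : m → R) (g : n → R) (v : o → R) :
    Sum.elim e₁ (Sum.elim g v) ⬝ᵥ
        (lmiMatrix Q N S B H Htil ρ γ *ᵥ Sum.elim e₁ (Sum.elim g v)) =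
      2 * ((Q *ᵥ e₁) ⬝ᵥ (N *ᵥ e₁ + S *ᵥ g + B *ᵥ v))
        + (e₁ - Htil *ᵥ v) ⬝ᵥ (e₁ - Htil *ᵥ v) - γ ^ 2 * (v ⬝ᵥ v)
        + (2 * ((H *ᵥ (e₁ - Htil *ᵥ v)) ⬝ᵥ g)
          - ρ * ((H *ᵥ (e₁ - Htil *ᵥ v)) ⬝ᵥ (H *ᵥ (e₁ - Htil *ᵥ v)))) := by
  rw [lmiMatrix, ← transpose_fromCols, dotProduct_mulVec_fromBlocks_transpose,
    fromCols_mulVec_sumElim, dotProduct_mulVec_fromBlocks_transpose]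
  simp only [add_mulVec, sub_mulVec, smul_mulVec, neg_mulVec, one_mulVec, zero_mulVec,
    ← mulVec_mulVec, mulVec_sub, dotProduct_add, dotProduct_sub, dotProduct_neg, dotProduct_smul,
    sub_dotProduct, smul_eq_mul, dotProduct_zero, dotProduct_transpose_mulVec,
    hQ.dotProduct_mulVec_comm]
  -- ordered rewriting with commutativity fixes one orientation for each dot product
  simp only [dotProduct_comm]
  simp only [dotProduct_transpose_mulVec]
  ring

/-- Quadratic-form bound for the Lyapunov derivative: under the sector inequality,
the dissipation expression `2⟨Q e₁, N e₁ + S g + ℬ v⟩ + ‖e₁ − H̃ v‖² − γ²‖v‖²` is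
bounded by the quadratic form of the LMI matrix `Π̃`; in particular it is nonpositive
whenever `−Π̃` is positive semidefinite. -/
theorem lyapunov_derivative_quadratic_bound (p l q : ℕ)
    (Q : Matrix (Fin p) (Fin p) ℝ) (hQ : Q.IsSymm)
    (N : Matrix (Fin p) (Fin p) ℝ) (S : Matrix (Fin p) (Fin l) ℝ)
    (B : Matrix (Fin p) (Fin q) ℝ) (H : Matrix (Fin l) (Fin p) ℝ)
    (Htil : Matrix (Fin p) (Fin q) ℝ) (ρ γ : ℝ)
    (ℋ : Matrix (Fin p) (Fin p) ℝ) (hℋ : ℋ = Hᵀ * H)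
    (Pi11 : Matrix (Fin p) (Fin p) ℝ) (hPi11 : Pi11 = Nᵀ * Q + Q * N - ρ • ℋ + 1)
    (Pi12 : Matrix (Fin p) (Fin l) ℝ) (hPi12 : Pi12 = Q * S + Hᵀ)
    (Pi13 : Matrix (Fin p) (Fin q) ℝ) (hPi13 : Pi13 = Q * B + ρ • (ℋ * Htil) - Htil)
    (Pi23 : Matrix (Fin l) (Fin q) ℝ) (hPi23 : Pi23 = -(H * Htil))
    (Pi33 : Matrix (Fin q) (Fin q) ℝ)
    (hPi33 : Pi33 = -(ρ • (Htilᵀ * ℋ * Htil)) + Htilᵀ * Htil - γ ^ 2 • (1 : Matrix (Fin q) (Fin q) ℝ))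
    (Pitil : Matrix (Fin p ⊕ (Fin l ⊕ Fin q)) (Fin p ⊕ (Fin l ⊕ Fin q)) ℝ)
    (hPitil : Pitil =
      Matrix.fromBlocks Pi11 (Matrix.fromCols Pi12 Pi13)
        (Matrix.fromRows Pi12ᵀ Pi13ᵀ) (Matrix.fromBlocks 0 Pi23 Pi23ᵀ Pi33)) :
    ∀ (e₁ : Fin p → ℝ) (g : Fin l → ℝ) (v : Fin q → ℝ),
      2 * ((H *ᵥ (e₁ - Htil *ᵥ v)) ⬝ᵥ g) ≥
          ρ * ((H *ᵥ (e₁ - Htil *ᵥ v)) ⬝ᵥ (H *ᵥ (e₁ - Htil *ᵥ v))) →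
        (2 * ((Q *ᵥ e₁) ⬝ᵥ (N *ᵥ e₁ + S *ᵥ g + B *ᵥ v))
              + (e₁ - Htil *ᵥ v) ⬝ᵥ (e₁ - Htil *ᵥ v) - γ ^ 2 * (v ⬝ᵥ v) ≤
            Sum.elim e₁ (Sum.elim g v) ⬝ᵥ (Pitil *ᵥ Sum.elim e₁ (Sum.elim g v))) ∧
          ((-Pitil).PosSemidef →
            2 * ((Q *ᵥ e₁) ⬝ᵥ (N *ᵥ e₁ + S *ᵥ g + B *ᵥ v))
                + (e₁ - Htil *ᵥ v) ⬝ᵥ (e₁ - Htil *ᵥ v) - γ ^ 2 * (v ⬝ᵥ v) ≤ 0) := by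
  intro e₁ g v hsector
  subst hℋ hPi11 hPi12 hPi13 hPi23 hPi33 hPitil
  have hform := dotProduct_lmiMatrix_mulVec hQ N S B H Htil ρ γ e₁ g v
  rw [lmiMatrix] at hform
  refine ⟨by linarith, fun hneg => ?_⟩
  have hnonneg := hneg.dotProduct_mulVec_nonneg (Sum.elim e₁ (Sum.elim g v))
  rw [neg_mulVec, dotProduct_neg, star_trivial] at hnonneg
  linarith
end

section
/- Let Q ∈ ℝ^{p×p} be symmetric, N ∈ ℝ^{p×p}, S ∈ ℝ^{p×l}, H ∈ ℝ^{l×p}, and ρ ∈ ℝ. Let Ω be the symmetric (p+l)×(p+l) block matrix with blocks Ω₁₁ = Nᵀ·Q + Q·N − ρ·Hᵀ·H + Iₚ, Ω₁₂ = Q·S + Hᵀ, Ω₂₂ = 0, and Ω₂₁ = Ω₁₂ᵀ. Then for all e₁ ∈ ℝᵖ and g ∈ ℝˡ satisfying 2·⟨H·e₁, g⟩ ≥ ρ·‖H·e₁‖², one has 2·⟨Q·e₁, N·e₁ + S·g⟩ + ‖e₁‖² ≤ ηᵀ·Ω·η, where η := (e₁, g) ∈ ℝ^{p+l}. In particular,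 if −Ω is positive semidefinite, then 2·⟨Q·e₁, N·e₁ + S·g⟩ ≤ −‖e₁‖². -/
/-!
Expanding `ηᵀ Ω η` block by block gives
`2⟨Q e₁, N e₁ + S g⟩ + (2⟨H e₁, g⟩ - ρ‖H e₁‖²) + ‖e₁‖²`; symmetry of `Q` is what identifies
`e₁ᵀ Q N e₁` and `e₁ᵀ Q S g` with `⟨Q e₁, N e₁⟩` and `⟨Q e₁, S g⟩`. The middle term is nonnegative
by the sector condition, and `ηᵀ Ω η ≤ 0` when `-Ω` is positive semidefinite.
-/

open Matrix

section QuadraticForms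

variable {m n R : Type*} [Fintype m] [Fintype n]

theorem dotProduct_transpose_mul_mulVec [CommSemiring R] {k : Type*} [Fintype k]
    (A : Matrix k m R) (B : Matrix k n R) (v : m → R) (w : n → R) :
    v ⬝ᵥ ((Aᵀ * B) *ᵥ w) = (A *ᵥ v) ⬝ᵥ (B *ᵥ w) := by
  rw [← mulVec_mulVec, dotProduct_transpose_mulVec, dotProduct_comm]

theorem Matrix.IsSymm.dotProduct_mul_mulVec [CommSemiring R] {Q : Matrix m m R} (hQ : Q.IsSymm)
    (B : Matrix m n R) (v : m → R) (w : n → R) :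
    v ⬝ᵥ ((Q * B) *ᵥ w) = (Q *ᵥ v) ⬝ᵥ (B *ᵥ w) := by
  conv_lhs => rw [← hQ.eq]
  exact dotProduct_transpose_mul_mulVec Q B v w

theorem sumElim_dotProduct_fromBlocks_transpose_mulVec [CommRing R]
    (A : Matrix m m R) (B : Matrix m n R) (D : Matrix n n R) (v : m → R) (w : n → R) :
    Sum.elim v w ⬝ᵥ (fromBlocks A B Bᵀ D *ᵥ Sum.elim v w) =
      v ⬝ᵥ (A *ᵥ v) + 2 * (v ⬝ᵥ (B *ᵥ w)) + w ⬝ᵥ (D *ᵥ w) := by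
  have hBt : w ⬝ᵥ (Bᵀ *ᵥ v) = v ⬝ᵥ (B *ᵥ w) := dotProduct_transpose_mulVec B w v
  rw [fromBlocks_mulVec, sumElim_dotProduct_sumElim]
  simp only [Sum.elim_comp_inl, Sum.elim_comp_inr, dotProduct_add, hBt]
  ring

theorem dotProduct_mulVec_nonpos_of_posSemidef_neg {M : Matrix n n ℝ} (hM : (-M).PosSemidef)
    (x : n → ℝ) : x ⬝ᵥ (M *ᵥ x) ≤ 0 := by
  have h := hM.dotProduct_mulVec_nonneg x
  rw [star_trivial, neg_mulVec, dotProduct_neg] at h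
  linarith

end QuadraticForms

theorem sumElim_dotProduct_lmi_mulVec {p l : Type*} [Fintype p] [Fintype l] [DecidableEq p]
    {Q : Matrix p p ℝ} (hQ : Q.IsSymm) (N : Matrix p p ℝ) (S : Matrix p l ℝ) (H : Matrix l p ℝ)
    (ρ : ℝ) (e₁ : p → ℝ) (g : l → ℝ) :
    Sum.elim e₁ g ⬝ᵥ
        (fromBlocks (Nᵀ * Q + Q * N - ρ • (Hᵀ * H) + 1) (Q * S + Hᵀ) (Q * S + Hᵀ)ᵀ 0 *ᵥ
          Sum.elim e₁ g) =
      2 * ((Q *ᵥ e₁) ⬝ᵥ (N *ᵥ e₁ + S *ᵥ g)) +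
        (2 * ((H *ᵥ e₁) ⬝ᵥ g) - ρ * ((H *ᵥ e₁) ⬝ᵥ (H *ᵥ e₁))) + e₁ ⬝ᵥ e₁ := by
  have hNQ : e₁ ⬝ᵥ ((Nᵀ * Q) *ᵥ e₁) = (Q *ᵥ e₁) ⬝ᵥ (N *ᵥ e₁) := by
    rw [dotProduct_transpose_mul_mulVec, dotProduct_comm]
  have hHt : e₁ ⬝ᵥ (Hᵀ *ᵥ g) = (H *ᵥ e₁) ⬝ᵥ g := by
    rw [dotProduct_transpose_mulVec, dotProduct_comm]
  rw [sumElim_dotProduct_fromBlocks_transpose_mulVec]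
  simp only [add_mulVec, sub_mulVec, smul_mulVec, one_mulVec, zero_mulVec, dotProduct_add,
    dotProduct_sub, dotProduct_smul, dotProduct_zero, smul_eq_mul, hQ.dotProduct_mul_mulVec, hNQ, hHt,
    dotProduct_transpose_mul_mulVec]
  ring

/-- Disturbance-free quadratic-form bound: under the sector inequality, the Lyapunov
derivative expression `2⟨Q e₁, N e₁ + S g⟩ + ‖e₁‖²` is bounded by the quadratic form
of the LMI matrix `Ω`; in particular `2⟨Q e₁, N e₁ + S g⟩ ≤ −‖e₁‖²` whenever `−Ω` is
positive semidefinite. -/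
theorem lyapunov_derivative_quadratic_bound_disturbance_free (p l : ℕ)
    (Q : Matrix (Fin p) (Fin p) ℝ) (hQ : Q.IsSymm)
    (N : Matrix (Fin p) (Fin p) ℝ) (S : Matrix (Fin p) (Fin l) ℝ)
    (H : Matrix (Fin l) (Fin p) ℝ) (ρ : ℝ)
    (Ω₁₁ : Matrix (Fin p) (Fin p) ℝ) (hΩ₁₁ : Ω₁₁ = Nᵀ * Q + Q * N - ρ • (Hᵀ * H) + 1)
    (Ω₁₂ : Matrix (Fin p) (Fin l) ℝ) (hΩ₁₂ : Ω₁₂ = Q * S + Hᵀ)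
    (Ω : Matrix (Fin p ⊕ Fin l) (Fin p ⊕ Fin l) ℝ)
    (hΩ : Ω = Matrix.fromBlocks Ω₁₁ Ω₁₂ Ω₁₂ᵀ 0) :
    ∀ (e₁ : Fin p → ℝ) (g : Fin l → ℝ),
      2 * ((H *ᵥ e₁) ⬝ᵥ g) ≥ ρ * ((H *ᵥ e₁) ⬝ᵥ (H *ᵥ e₁)) →
        (2 * ((Q *ᵥ e₁) ⬝ᵥ (N *ᵥ e₁ + S *ᵥ g)) + e₁ ⬝ᵥ e₁ ≤
            Sum.elim e₁ g ⬝ᵥ (Ω *ᵥ Sum.elim e₁ g)) ∧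
          ((-Ω).PosSemidef →
            2 * ((Q *ᵥ e₁) ⬝ᵥ (N *ᵥ e₁ + S *ᵥ g)) ≤ -(e₁ ⬝ᵥ e₁)) := by
  intro e₁ g hsector
  have hform := sumElim_dotProduct_lmi_mulVec hQ N S H ρ e₁ g
  rw [← hΩ₁₁, ← hΩ₁₂, ← hΩ] at hform
  have hbound : 2 * ((Q *ᵥ e₁) ⬝ᵥ (N *ᵥ e₁ + S *ᵥ g)) + e₁ ⬝ᵥ e₁ ≤
      Sum.elim e₁ g ⬝ᵥ (Ω *ᵥ Sum.elim e₁ g) := by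
    linarith
  refine ⟨hbound, fun hΩneg => ?_⟩
  linarith [dotProduct_mulVec_nonpos_of_posSemidef_neg hΩneg (Sum.elim e₁ g)]
end

section
/- Let Q be a symmetric positive-definite real p×p matrix and let x : ℝ → ℝᵖ be a differentiable function such that for every t ≥ 0 the function V(t) := ⟨x(t), Q·x(t)⟩ satisfies V′(t) ≤ −‖x(t)‖². Then x(t) → 0 as t → ∞. -/
/-!
On `Fin p → ℝ`, whose sup norm is at most the Euclidean one, the quadratic form
`V(v) = ⟨v, Q v⟩` is squeezed between `m ‖v‖²` and `M ‖v‖²` with `m, M > 0`: by homogeneity it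
suffices to bound `V` on the compact unit sphere, where positive definiteness makes its minimum
positive. The upper bound turns `V′ ≤ -⟨x, x⟩` into `V′ ≤ -V / M`, so Grönwall gives
`V(t) ≤ V(0) e^{-t/M}`, and the lower bound then forces `‖x(t)‖² ≤ V(0) e^{-t/M} / m → 0`.
-/

open Matrix Metric Filter Topology Real

section QuadraticBounds

variable {E : Type*} [NormedAddCommGroup E] [NormedSpace ℝ E] {q : E → ℝ}

theorem mul_norm_sq_le_of_forall_sphere (hq : ∀ (c : ℝ) v, q (c • v) = c ^ 2 * q v) {a : ℝ}
    (ha : ∀ u ∈ sphere (0 : E) 1, a ≤ q u) (v : E) : a * ‖v‖ ^ 2 ≤ q v := by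
  rcases eq_or_ne v 0 with rfl | hv
  · have hq0 : q 0 = 0 := by simpa using hq 0 0
    simp [hq0]
  have hv' : ‖v‖ ≠ 0 := norm_ne_zero_iff.mpr hv
  have hu := ha (‖v‖⁻¹ • v) (by simp [norm_smul, hv'])
  rw [hq] at hu
  calc a * ‖v‖ ^ 2 ≤ ‖v‖⁻¹ ^ 2 * q v * ‖v‖ ^ 2 := by gcongr
    _ = q v := by field_simp

variable [FiniteDimensional ℝ E]

theorem exists_pos_mul_norm_sq_le (hcont : Continuous q)
    (hq : ∀ (c : ℝ) v, q (c • v) = c ^ 2 * q v)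
    (hpos : ∀ v ≠ 0, 0 < q v) : ∃ m, 0 < m ∧ ∀ v, m * ‖v‖ ^ 2 ≤ q v := by
  rcases (sphere (0 : E) 1).eq_empty_or_nonempty with hS | hS
  · exact ⟨1, one_pos, mul_norm_sq_le_of_forall_sphere hq (by simp [hS])⟩
  obtain ⟨u, hu, hmin⟩ := (isCompact_sphere (0 : E) 1).exists_isMinOn hS hcont.continuousOn
  exact ⟨q u, hpos u (ne_of_mem_sphere hu one_ne_zero), mul_norm_sq_le_of_forall_sphere hq hmin⟩

theorem exists_pos_le_mul_norm_sq (hcont : Continuous q)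
    (hq : ∀ (c : ℝ) v, q (c • v) = c ^ 2 * q v) :
    ∃ M, 0 < M ∧ ∀ v, q v ≤ M * ‖v‖ ^ 2 := by
  obtain ⟨M, hM⟩ := (isCompact_sphere (0 : E) 1).bddAbove_image hcont.continuousOn
  refine ⟨max M 1, one_pos.trans_le (le_max_right _ _), fun v => ?_⟩
  have hbound : ∀ u ∈ sphere (0 : E) 1, -max M 1 ≤ -q u := fun u hu =>
    neg_le_neg <| (hM (Set.mem_image_of_mem q hu)).trans (le_max_left _ _)
  have hneg := mul_norm_sq_le_of_forall_sphere (q := fun v => -q v)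
    (fun c v => by simp [hq]) hbound v
  linarith

end QuadraticBounds

theorem le_mul_exp_of_deriv_le_mul {V : ℝ → ℝ} {K : ℝ} (hV : Differentiable ℝ V)
    (hV' : ∀ t, 0 ≤ t → deriv V t ≤ K * V t) {t : ℝ} (ht : 0 ≤ t) :
    V t ≤ V 0 * exp (K * t) := by
  have := le_gronwallBound_of_liminf_deriv_right_le (ε := 0) hV.continuous.continuousOn
    (fun s _ r hr => (hV s).hasDerivAt.hasDerivWithinAt.liminf_right_slope_le hr) le_rfl
    (fun s hs => by simpa using hV' s hs.1) t ⟨ht, le_rfl⟩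
  simpa [gronwallBound_ε0] using this

theorem Matrix.norm_sq_le_dotProduct_self {n : Type*} [Fintype n] (v : n → ℝ) :
    ‖v‖ ^ 2 ≤ v ⬝ᵥ v := by
  have hcoord : ∀ i, ‖v i‖ ≤ √(v ⬝ᵥ v) := fun i =>
    Real.le_sqrt_of_sq_le <| by
      simpa [sq, dotProduct] using Finset.single_le_sum (f := fun j => v j * v j)
        (fun j _ => mul_self_nonneg _) (Finset.mem_univ i)
  calc ‖v‖ ^ 2 ≤ √(v ⬝ᵥ v) ^ 2 := by
        gcongr
        exact (pi_norm_le_iff_of_nonneg (by positivity)).mpr hcoord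
    _ = v ⬝ᵥ v := Real.sq_sqrt (Finset.sum_nonneg fun j _ => mul_self_nonneg _)

theorem Matrix.smul_dotProduct_mulVec_smul {n R : Type*} [Fintype n] [CommRing R]
    (Q : Matrix n n R) (c : R) (v : n → R) :
    (c • v) ⬝ᵥ (Q *ᵥ (c • v)) = c ^ 2 * (v ⬝ᵥ (Q *ᵥ v)) := by
  simp only [mulVec_smul, smul_dotProduct, dotProduct_smul, smul_eq_mul]
  ring

/-- Lyapunov convergence: if `Q` is symmetric positive definite, `x` is differentiable,
and `V(t) = ⟨x(t), Q x(t)⟩` satisfies `V′(t) ≤ −‖x(t)‖²` for all `t ≥ 0`, then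
`x(t) → 0` as `t → ∞`. -/
theorem lyapunov_convergence (p : ℕ)
    (Q : Matrix (Fin p) (Fin p) ℝ) (hQ : Q.PosDef)
    (x : ℝ → Fin p → ℝ) (hx : Differentiable ℝ x)
    (hV : ∀ t : ℝ, 0 ≤ t →
      deriv (fun τ : ℝ => x τ ⬝ᵥ (Q *ᵥ x τ)) t ≤ -(x t ⬝ᵥ x t)) :
    Filter.Tendsto x Filter.atTop (nhds 0) := by
  set V := fun τ : ℝ => x τ ⬝ᵥ (Q *ᵥ x τ)
  have hq : Continuous fun v : Fin p → ℝ => v ⬝ᵥ (Q *ᵥ v) := by fun_prop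
  obtain ⟨m, hm, hlower⟩ := exists_pos_mul_norm_sq_le hq Q.smul_dotProduct_mulVec_smul
    fun v hv => by simpa using hQ.dotProduct_mulVec_pos hv
  obtain ⟨M, hM, hupper⟩ := exists_pos_le_mul_norm_sq hq Q.smul_dotProduct_mulVec_smul
  have hVdiff : Differentiable ℝ V := by
    have hxi : ∀ i, Differentiable ℝ fun τ => x τ i := differentiable_pi.mp hx
    simp only [V, dotProduct, mulVec]
    fun_prop
  have hdissipation : ∀ s, -(x s ⬝ᵥ x s) ≤ -M⁻¹ * V s := fun s => by
    rw [neg_mul, neg_le_neg_iff, inv_mul_le_iff₀ hM]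
    exact (hupper (x s)).trans (by gcongr; exact norm_sq_le_dotProduct_self (x s))
  have hdecay : ∀ t, 0 ≤ t → V t ≤ V 0 * exp (-M⁻¹ * t) := fun t =>
    le_mul_exp_of_deriv_le_mul hVdiff fun s hs => (hV s hs).trans (hdissipation s)
  have hsq : Tendsto (fun t => ‖x t‖ ^ 2) atTop (𝓝 0) := by
    have hexp : Tendsto (fun t => V 0 / m * exp (-M⁻¹ * t)) atTop (𝓝 0) := by
      simpa using (tendsto_exp_atBot.comp
        (tendsto_id.const_mul_atTop_of_neg (neg_lt_zero.mpr (inv_pos.mpr hM)))).const_mul (V 0 / m)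
    refine squeeze_zero' (.of_forall fun t => by positivity) ?_ hexp
    filter_upwards [eventually_ge_atTop 0] with t ht
    rw [div_mul_eq_mul_div, le_div_iff₀' hm]
    exact (hlower (x t)).trans (hdecay t ht)
  rw [tendsto_zero_iff_norm_tendsto_zero]
  simpa using hsq.sqrt
end
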